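/- arXiv:1504.07265 — 3 statements merged into one kernel-verified Lean document; each statement's English description precedes it below -/
import Mathlib

section
/- Any pattern σ ∈ S_m with σ_1 = 1 and σ_m = 2 (m ≥ 3) is non-overlapping. -/
/-- `i` is in the overlap set of the pattern `σ ∈ S m` (0-indexed entries). -/
def overlapAt {m : ℕ} (σ : Equiv.Perm (Fin m)) (i : ℕ) : Prop :=
  1 ≤ i ∧ i < m ∧ ∀ j k : ℕ, ∀ hj : j < m - i, ∀ hk : k < m - i,
    (σ ⟨i + j, by omega⟩ < σ ⟨i + k, by omega⟩ ↔ σ ⟨j, by omega⟩ < σ ⟨k, by omega⟩)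

/-- Any pattern `σ ∈ S m` with `m ≥ 3`, first entry `1` and last entry `2`
(0-indexed: `σ(0) = 0` and `σ(m-1) = 1`) is non-overlapping: its overlap set is `{m-1}`. -/
theorem first1_last2_nonoverlapping {m : ℕ} (hm : 3 ≤ m) (σ : Equiv.Perm (Fin m))
    (h1 : σ ⟨0, by omega⟩ = ⟨0, by omega⟩) (h2 : σ ⟨m - 1, by omega⟩ = ⟨1, by omega⟩) :
    ∀ i : ℕ, overlapAt σ i ↔ i = m - 1 := by
  intro i
  constructor
  · rintro ⟨hi1, him, hc⟩
    by_contra hne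
    have hlt : i < m - 1 := by omega
    have key := hc (m - i - 1) 0 (by omega) (by omega)
    -- value of the last entry of the suffix window
    have ea : σ ⟨i + (m - i - 1), by omega⟩ = ⟨1, by omega⟩ :=
      (congrArg σ (Fin.ext (show i + (m - i - 1) = m - 1 by omega))).trans h2
    have hva : (σ ⟨i + (m - i - 1), by omega⟩ : Fin m).val = 1 := congrArg Fin.val ea
    -- the first entry of the suffix window is ≥ 2
    have hv0 : (σ ⟨i + 0, by omega⟩ : Fin m).val ≠ 0 := by
      intro h
      have : σ ⟨i + 0, by omega⟩ = σ ⟨0, by omega⟩ := by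
        refine Fin.ext ?_
        have h1v : (σ ⟨0, by omega⟩ : Fin m).val = 0 := congrArg Fin.val h1
        omega
      have := σ.injective this
      simp only [Fin.mk.injEq] at this
      omega
    have hv1 : (σ ⟨i + 0, by omega⟩ : Fin m).val ≠ 1 := by
      intro h
      have : σ ⟨i + 0, by omega⟩ = σ ⟨m - 1, by omega⟩ := by
        refine Fin.ext ?_
        have h2v : (σ ⟨m - 1, by omega⟩ : Fin m).val = 1 := congrArg Fin.val h2
        omega
      have := σ.injective this
      simp only [Fin.mk.injEq] at this
      omega
    have hL : (σ ⟨i + (m - i - 1), by omega⟩ : Fin m) < σ ⟨i + 0, by omega⟩ := by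
      rw [Fin.lt_def]; omega
    have hR : (σ ⟨m - i - 1, by omega⟩ : Fin m) < σ ⟨0, by omega⟩ := key.mp hL
    rw [Fin.lt_def] at hR
    have h1v : (σ ⟨0, by omega⟩ : Fin m).val = 0 := congrArg Fin.val h1
    omega
  · rintro rfl
    refine ⟨by omega, by omega, fun j k hj hk => ?_⟩
    have hj0 : j = 0 := by omega
    have hk0 : k = 0 := by omega
    subst hj0; subst hk0
    simp
end

section
/- For all n ≥ 4, the number of permutations in S_n avoiding the consecutive pattern 123 is strictly greater than the number of permutations in S_n avoiding the consecutive pattern 132. -/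
/-!
Comparing each entry with the last entry read (not written), `List.breakAscents` rewrites every
`a b c` with `a < b < c` into `a c b`. On 132-avoiding permutations the result avoids 123, and the
map is injective there: without a swap, the output `a c b` could only come from the input `a c b`,
which is a 132. No output starts with `o₀ o₁ o₂ o₃` where `o₀ < o₂ < o₃ < o₁`, while the
123-avoider `n-4, n-1, n-3, n-2, n-5, …, 1, 0` does, so the map is not onto.
-/

/-- The consecutive pattern `σ ∈ S m` occurs in `π ∈ S n` at (0-indexed) position `i`. -/
def occursAt {m n : ℕ} (σ : Equiv.Perm (Fin m)) (π : Equiv.Perm (Fin n)) (i : ℕ) : Prop :=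
  ∃ h : i + m ≤ n, ∀ j k : Fin m,
    σ j < σ k ↔ π ⟨i + j, by have := j.isLt; omega⟩ < π ⟨i + k, by have := k.isLt; omega⟩

/-- `α n σ`: the number of permutations of length `n` avoiding `σ` as a consecutive pattern. -/
noncomputable def avoiders {m : ℕ} (n : ℕ) (σ : Equiv.Perm (Fin m)) : ℕ :=
  Nat.card {π : Equiv.Perm (Fin n) // ∀ i : ℕ, ¬ occursAt σ π i}

/-- The pattern `123` (the identity). -/
def p123 : Equiv.Perm (Fin 3) := Equiv.refl (Fin 3)

/-- The pattern `132` (0-indexed `0 2 1`). -/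
def p132 : Equiv.Perm (Fin 3) := Equiv.swap 1 2

namespace List

variable {α : Type*}

def TripleChain (R : α → α → α → Prop) : List α → Prop
  | [] | [_] | [_, _] => True
  | a :: b :: c :: t => R a b c ∧ TripleChain R (b :: c :: t)

theorem tripleChain_cons_cons {R : α → α → α → Prop} {a b : α} {l : List α} :
    TripleChain R (a :: b :: l) ↔ (∀ c ∈ l.head?, R a b c) ∧ TripleChain R (b :: l) := by
  cases l <;> simp [TripleChain]

theorem TripleChain.tail {R : α → α → α → Prop} {a : α} {l : List α}
    (h : TripleChain R (a :: l)) : TripleChain R l := by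
  cases l with
  | nil => trivial
  | cons b l => exact (tripleChain_cons_cons.1 h).2

theorem tripleChain_iff_getElem {R : α → α → α → Prop} {l : List α} :
    TripleChain R l ↔ ∀ i (h : i + 3 ≤ l.length), R l[i] l[i + 1] l[i + 2] := by
  match l with
  | [] | [_] | [_, _] => simp [TripleChain]
  | a :: b :: c :: t =>
    rw [TripleChain, tripleChain_iff_getElem]
    constructor
    · rintro ⟨h0, h⟩ (_ | i) hi
      · exact h0
      · exact h i (by simp at hi ⊢; omega)
    · intro h
      exact ⟨h 0 (by simp), fun i hi => h (i + 1) (by simp at hi ⊢; omega)⟩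

variable [LinearOrder α]

abbrev Avoids123 (l : List α) : Prop := TripleChain (fun a b c => ¬(a < b ∧ b < c)) l

abbrev Avoids132 (l : List α) : Prop := TripleChain (fun a b c => ¬(a < c ∧ c < b)) l

def breakAscentsFrom (a : α) : List α → List α
  | [] => []
  | [b] => [b]
  | b :: c :: t =>
    if a < b ∧ b < c then c :: b :: breakAscentsFrom c t else b :: breakAscentsFrom b (c :: t)

def breakAscents : List α → List α
  | [] => []
  | a :: l => a :: breakAscentsFrom a l

theorem breakAscentsFrom_perm (a : α) (l : List α) : breakAscentsFrom a l ~ l := by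
  fun_induction breakAscentsFrom a l with
  | case1 | case2 => rfl
  | case3 _ b c t _ ih => exact ((ih.cons b).cons c).trans (.swap b c t)
  | case4 _ b c t _ ih => exact ih.cons b

theorem exists_breakAscentsFrom_cons (a b : α) (l : List α) :
    ∃ x r, breakAscentsFrom a (b :: l) = x :: r ∧ (x = b ∨ a < b ∧ b < x) := by
  cases l with
  | nil => exact ⟨b, [], rfl, .inl rfl⟩
  | cons c t =>
    rw [breakAscentsFrom]
    split_ifs with h
    · exact ⟨c, _, rfl, .inr h⟩
    · exact ⟨b, _, rfl, .inl rfl⟩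

-- `p` is the last entry written and `a` the last one read; they differ right after a swap.
theorem avoids123_cons_breakAscentsFrom {p a : α} {l : List α} (hnd : (a :: l).Nodup)
    (h132 : Avoids132 (a :: l)) (hp : ∀ b ∈ l.head?, ¬(p < b ∧ b < a)) :
    Avoids123 (p :: breakAscentsFrom a l) := by
  fun_induction breakAscentsFrom a l generalizing p with
  | case1 | case2 => simp [TripleChain]
  | case3 a b c t hs ih =>
    have hbct := tripleChain_cons_cons.1 h132.tail
    refine tripleChain_cons_cons.2 ⟨?_, tripleChain_cons_cons.2 ⟨?_, ?_⟩⟩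
    · simpa using fun _ => hs.2.le
    · exact fun _ _ hcb => absurd hcb.1 hs.2.not_gt
    · exact ih hnd.of_cons.of_cons hbct.2 hbct.1
  | case4 a b c t hs ih =>
    obtain ⟨x, r, hxr, hx⟩ := exists_breakAscentsFrom_cons b c t
    rw [hxr] at ih ⊢
    refine tripleChain_cons_cons.2 ⟨?_, ih hnd.of_cons h132.tail fun _ _ h => lt_asymm h.1 h.2⟩
    simp only [head?_cons, Option.mem_def, Option.some.injEq, forall_eq'] at hp ⊢
    rintro ⟨hpb, hbx⟩
    have hab : a < b := lt_of_le_of_ne (not_lt.1 fun hba => hp ⟨hpb, hba⟩)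
      fun h => (nodup_cons.1 hnd).1 (h ▸ mem_cons_self)
    have hbc : ¬b < c := fun hbc => hs ⟨hab, hbc⟩
    rcases hx with rfl | ⟨hbc', -⟩
    exacts [hbc hbx, hbc hbc']

theorem length_breakAscentsFrom (a : α) (l : List α) : (breakAscentsFrom a l).length = l.length :=
  (breakAscentsFrom_perm a l).length_eq

theorem breakAscentsFrom_of_length_le_one {a : α} {l : List α} (hl : l.length ≤ 1) :
    breakAscentsFrom a l = l := by
  match l with
  | [] | [_] => simp [breakAscentsFrom]

theorem cons_ne_breakAscentsFrom_cons {a b c c' : α} {r t : List α} (hab : a < b) (hbc : b < c)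
    (h : Avoids132 (a :: c :: c' :: t)) : b :: r ≠ breakAscentsFrom c (c' :: t) := by
  obtain ⟨x, r', hxr, hx⟩ := exists_breakAscentsFrom_cons c c' t
  have hacc' : ¬(a < c' ∧ c' < c) := by simpa using (tripleChain_cons_cons.1 h).1
  rw [hxr, ne_eq, cons.injEq]
  grind

theorem breakAscentsFrom_injective {a : α} {l l' : List α} (h : Avoids132 (a :: l))
    (h' : Avoids132 (a :: l')) (he : breakAscentsFrom a l = breakAscentsFrom a l') : l = l' := by
  have hlen : l'.length = l.length := by
    simpa only [length_breakAscentsFrom] using congrArg length he.symm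
  fun_induction breakAscentsFrom a l generalizing l' with
  | case1 | case2 =>
    rwa [breakAscentsFrom_of_length_le_one (l := l') (by rw [hlen]; simp)] at he
  | case3 a b c t hs ih =>
    obtain ⟨b', c', t', rfl⟩ : ∃ b' c' t', l' = b' :: c' :: t' := by
      match l', hlen with
      | b' :: c' :: t', _ => exact ⟨b', c', t', rfl⟩
    rw [breakAscentsFrom] at he
    split_ifs at he with hs'
    · simp only [cons.injEq] at he
      obtain ⟨rfl, rfl, he⟩ := he
      rw [ih h.tail.tail h'.tail.tail he (by simpa using hlen)]
    · simp only [cons.injEq] at he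
      obtain ⟨rfl, he⟩ := he
      exact absurd he (cons_ne_breakAscentsFrom_cons hs.1 hs.2 h')
  | case4 a b c t hs ih =>
    obtain ⟨b', c', t', rfl⟩ : ∃ b' c' t', l' = b' :: c' :: t' := by
      match l', hlen with
      | b' :: c' :: t', _ => exact ⟨b', c', t', rfl⟩
    rw [breakAscentsFrom] at he
    split_ifs at he with hs'
    · simp only [cons.injEq] at he
      obtain ⟨rfl, he⟩ := he
      exact absurd he.symm (cons_ne_breakAscentsFrom_cons hs'.1 hs'.2 h)
    · simp only [cons.injEq] at he
      obtain ⟨rfl, he⟩ := he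
      rw [ih h.tail h'.tail he (by simpa using hlen)]

theorem not_lt_of_breakAscents_eq {l r : List α} {o₀ o₁ o₂ o₃ : α} (h : Avoids132 l)
    (he : breakAscents l = o₀ :: o₁ :: o₂ :: o₃ :: r) : ¬(o₀ < o₂ ∧ o₂ < o₃ ∧ o₃ < o₁) := by
  obtain ⟨a, b, c, t, rfl⟩ : ∃ a b c t, l = a :: b :: c :: t := by
    match l, he with
    | a :: b :: c :: t, _ => exact ⟨a, b, c, t, rfl⟩
  have habc : ¬(a < c ∧ c < b) := by simpa using (tripleChain_cons_cons.1 h).1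
  rw [breakAscents, breakAscentsFrom] at he
  split_ifs at he with hs
  · obtain ⟨t₀, t, rfl⟩ : ∃ t₀ t', t = t₀ :: t' := by
      match t, he with
      | t₀ :: t', _ => exact ⟨t₀, t', rfl⟩
    obtain ⟨x, r', hxr, hx⟩ := exists_breakAscentsFrom_cons c t₀ t
    have hbct : ¬(b < t₀ ∧ t₀ < c) := by
      simpa using (tripleChain_cons_cons.1 h.tail).1
    rw [hxr] at he
    simp only [cons.injEq] at he
    grind
  · obtain ⟨x, r', hxr, hx⟩ := exists_breakAscentsFrom_cons b c t
    rw [hxr] at he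
    simp only [cons.injEq] at he
    grind

theorem avoids123_of_pairwise_gt {l : List α} (h : l.Pairwise (· > ·)) : Avoids123 l := by
  rw [Avoids123, tripleChain_iff_getElem]
  intro i hi hlt
  exact lt_asymm hlt.1 (pairwise_iff_getElem.1 h i (i + 1) _ _ (by omega))

theorem avoids123_of_pairwise_gt_cons {r₀ r₁ r₂ r₃ : α} {t : List α}
    (h : (r₀ :: r₁ :: r₂ :: r₃ :: t).Pairwise (· > ·)) : Avoids123 (r₃ :: r₀ :: r₂ :: r₁ :: t) := by
  have ht : Avoids123 (r₁ :: t) := avoids123_of_pairwise_gt (h.sublist (by simp [sublist_cons_iff]))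
  simp only [pairwise_cons, mem_cons] at h
  have h₀₂ : r₂ < r₀ := h.1 r₂ (by simp)
  refine tripleChain_cons_cons.2 ⟨?_, tripleChain_cons_cons.2 ⟨?_,
    tripleChain_cons_cons.2 ⟨?_, ht⟩⟩⟩
  · simpa using fun _ => h₀₂.le
  · exact fun _ _ h' => lt_asymm h₀₂ h'.1
  · exact fun x hx h' => lt_asymm h'.2 (h.2.1 x (.inr (.inr (mem_of_mem_head? hx))))

theorem breakAscents_perm (l : List α) : breakAscents l ~ l := by
  cases l with
  | nil => rfl
  | cons a l => exact (breakAscentsFrom_perm a l).cons a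

theorem Avoids132.avoids123_breakAscents {l : List α} (hnd : l.Nodup) (h : Avoids132 l) :
    Avoids123 (breakAscents l) := by
  cases l with
  | nil => trivial
  | cons a l => exact avoids123_cons_breakAscentsFrom hnd h fun b _ hb => lt_asymm hb.1 hb.2

theorem breakAscents_injOn : Set.InjOn breakAscents {l : List α | Avoids132 l} := by
  rintro (_ | ⟨a, l⟩) h (_ | ⟨a', l'⟩) h' he
  · rfl
  all_goals simp only [breakAscents, reduceCtorEq, cons.injEq] at he
  obtain ⟨rfl, he⟩ := he
  rw [breakAscentsFrom_injective h h' he]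

theorem exists_perm_avoids123_forall_breakAscents_ne {l : List α} (hl : l.Pairwise (· > ·))
    (hlen : 4 ≤ l.length) :
    ∃ w, w ~ l ∧ Avoids123 w ∧ ∀ l', Avoids132 l' → breakAscents l' ≠ w := by
  obtain ⟨r₀, r₁, r₂, r₃, t, rfl⟩ : ∃ r₀ r₁ r₂ r₃ t, l = r₀ :: r₁ :: r₂ :: r₃ :: t := by
    match l, hlen with
    | r₀ :: r₁ :: r₂ :: r₃ :: t, _ => exact ⟨r₀, r₁, r₂, r₃, t, rfl⟩
  refine ⟨r₃ :: r₀ :: r₂ :: r₁ :: t,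
    (perm_middle (l₁ := [r₀, r₂, r₁])).symm.trans ((Perm.swap r₁ r₂ _).cons r₀),
    avoids123_of_pairwise_gt_cons hl, fun l' h' he => not_lt_of_breakAscents_eq h' he ?_⟩
  simp only [pairwise_cons, mem_cons] at hl
  exact ⟨hl.2.2.1 r₃ (by simp), hl.2.1 r₂ (by simp), hl.1 r₁ (by simp)⟩

end List

theorem exists_ofFn_eq {n : ℕ} {l : List (Fin n)} (hnd : l.Nodup) (hlen : l.length = n) :
    ∃ π : Equiv.Perm (Fin n), List.ofFn π = l := by
  have hinj : Function.Injective fun i : Fin n => l[i.1] := fun i j hij =>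
    Fin.ext ((hnd.getElem_inj_iff).1 hij)
  refine ⟨Equiv.ofBijective _ (Finite.injective_iff_bijective.1 hinj), ?_⟩
  apply List.ext_getElem (by simp [hlen])
  intro i _ _
  simp

theorem avoiders_eq_ncard {m n : ℕ} (σ : Equiv.Perm (Fin m)) (P : List (Fin n) → Prop)
    (hP : ∀ π : Equiv.Perm (Fin n), (∀ i, ¬occursAt σ π i) ↔ P (List.ofFn π)) :
    avoiders n σ = {l : List (Fin n) | l.Nodup ∧ l.length = n ∧ P l}.ncard := by
  have hinj : Function.Injective fun π : Equiv.Perm (Fin n) => List.ofFn π :=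
    List.ofFn_injective.comp DFunLike.coe_injective
  rw [avoiders, ← Set.coe_ofPred, Nat.card_coe_set_eq, ← Set.ncard_image_of_injective _ hinj]
  congr 1
  ext l
  constructor
  · rintro ⟨π, hπ, rfl⟩
    exact ⟨List.nodup_ofFn.2 π.injective, by simp, (hP π).1 hπ⟩
  · rintro ⟨hnd, hlen, hl⟩
    obtain ⟨π, rfl⟩ := exists_ofFn_eq hnd hlen
    exact ⟨π, (hP π).2 hl, rfl⟩

theorem occursAt_iff_strictMono {m n : ℕ} (σ : Equiv.Perm (Fin m)) (π : Equiv.Perm (Fin n))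
    (i : ℕ) : occursAt σ π i ↔
      ∃ h : i + m ≤ n, StrictMono fun j : Fin m => π ⟨i + σ.symm j, by omega⟩ := by
  refine exists_congr fun h => ⟨fun hσ j k hjk => ?_, fun hmono j k => ?_⟩
  · exact (hσ (σ.symm j) (σ.symm k)).1 (by simpa using hjk)
  · simpa using (hmono.lt_iff_lt (a := σ j) (b := σ k)).symm

theorem forall_not_occursAt_p123_iff {n : ℕ} (π : Equiv.Perm (Fin n)) :
    (∀ i, ¬occursAt p123 π i) ↔ List.Avoids123 (List.ofFn π) := by
  simp [occursAt_iff_strictMono, Fin.strictMono_iff_lt_succ, Fin.forall_fin_two,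
    List.tripleChain_iff_getElem, p123]

theorem forall_not_occursAt_p132_iff {n : ℕ} (π : Equiv.Perm (Fin n)) :
    (∀ i, ¬occursAt p132 π i) ↔ List.Avoids132 (List.ofFn π) := by
  simp [occursAt_iff_strictMono, Fin.strictMono_iff_lt_succ, Fin.forall_fin_two,
    List.tripleChain_iff_getElem, p132, Equiv.swap_apply_of_ne_of_ne]

theorem ncard_avoids132_lt_ncard_avoids123 {n : ℕ} (hn : 4 ≤ n) :
    {l : List (Fin n) | l.Nodup ∧ l.length = n ∧ l.Avoids132}.ncard <
      {l : List (Fin n) | l.Nodup ∧ l.length = n ∧ l.Avoids123}.ncard := by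
  set S₁₃₂ := {l : List (Fin n) | l.Nodup ∧ l.length = n ∧ l.Avoids132}
  set S₁₂₃ := {l : List (Fin n) | l.Nodup ∧ l.length = n ∧ l.Avoids123}
  have hmaps : Set.MapsTo List.breakAscents S₁₃₂ S₁₂₃ := fun l ⟨hnd, hlen, h⟩ =>
    ⟨(l.breakAscents_perm.nodup_iff).2 hnd, l.breakAscents_perm.length_eq.trans hlen,
      h.avoids123_breakAscents hnd⟩
  have hinj : Set.InjOn List.breakAscents S₁₃₂ := List.breakAscents_injOn.mono fun _ h => h.2.2
  have hrev : ((List.finRange n).reverse).Pairwise (· > ·) :=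
    List.pairwise_reverse.2 (List.pairwise_lt_finRange n)
  obtain ⟨w, hw, hw123, hwne⟩ :=
    List.exists_perm_avoids123_forall_breakAscents_ne hrev (by simpa using hn)
  have hwS : w ∈ S₁₂₃ :=
    ⟨hw.nodup_iff.2 (List.nodup_reverse.2 (List.nodup_finRange n)), by simp [hw.length_eq], hw123⟩
  calc S₁₃₂.ncard = (List.breakAscents '' S₁₃₂).ncard := hinj.ncard_image.symm
    _ < S₁₂₃.ncard := by
      refine Set.ncard_lt_ncard (hmaps.image_subset.ssubset_of_mem_notMem hwS ?_)
        ((List.finite_length_eq _ n).subset fun _ h => h.2.1)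
      rintro ⟨l, hl, he⟩
      exact hwne l hl.2.2 he

/-- For all `n ≥ 4`, `α_n(123) > α_n(132)`. -/
theorem avoiders_123_gt_132 : ∀ n : ℕ, 4 ≤ n → avoiders n p132 < avoiders n p123 := by
  intro n hn
  rw [avoiders_eq_ncard p132 _ forall_not_occursAt_p132_iff,
    avoiders_eq_ncard p123 _ forall_not_occursAt_p123_iff]
  exact ncard_avoids132_lt_ncard_avoids123 hn
end

section
/- The permutation 321 is a forbidden pattern of the logistic map L(x) = 4x(1−x) on [0,1]: there is no x ∈ [0,1] such that x > L(x) > L(L(x)). -/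
/-- The logistic map `L(x) = 4x(1-x)`. -/
noncomputable def logisticMap (x : ℝ) : ℝ := 4 * x * (1 - x)

/-- `321` is a forbidden pattern of the logistic map on `[0,1]`: there is no `x ∈ [0,1]`
with `x > L(x) > L(L(x))`. -/
theorem logistic_forbidden_321 :
    ¬ ∃ x : ℝ, x ∈ Set.Icc (0 : ℝ) 1 ∧
      logisticMap x < x ∧ logisticMap (logisticMap x) < logisticMap x := by
  rintro ⟨x, ⟨hx0, hx1⟩, h1, h2⟩
  simp only [logisticMap] at h1 h2
  -- h1 : 4x(1-x) < x  ⇒ x > 3/4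
  have hx : 3/4 < x := by nlinarith
  set y := 4 * x * (1 - x) with hy
  have hy0 : 0 ≤ y := by nlinarith
  have hy34 : y < 3/4 := by nlinarith [sq_nonneg (4*x - 3)]
  nlinarith [mul_nonneg hy0 hy0]
end
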